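/- arXiv:2110.07881 — 6 statements merged into one kernel-verified Lean document; each statement's English description precedes it below -/
import Mathlib

section
/- Madow's systematic sampling scheme is correct: given a vector p ∈ [0,1]^N with ∑_i p_i = k, define Π_0 = 0 and Π_j = Π_{j-1} + p_j; draw U uniform on [0,1] and select element j if there exists an integer i with 0 ≤ i ≤ k-1 such that Π_{j-1} ≤ U + i < Π_j. Then the selected set S has exactly k elements, and P(j ∈ S) = p_j for every j ∈ {1,...,N}. -/
/-! Write `Π j = ∑_{l < j} p l`. As `0 ≤ p` and `Π N = k`, every level `U + i` with `i < k` lies in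
`[0, k)`, hence in exactly one interval `[Π j, Π (j + 1))`; as `p ≤ 1` these intervals have length
at most one, so distinct levels land in distinct intervals, and `i ↦ j` is a bijection from
`range k` onto the selected set. For the inclusion probability, `U ↦ U + i` carries `[0, 1)` onto
`[i, i + 1)`, and for different `i` the resulting sets of `U` are disjoint (again by `p ≤ 1`), so the
set of `U` selecting `j` has the measure of `[Π j, Π (j + 1)) ∩ [0, k)`, which is `p j`. -/

open MeasureTheory

/-- The set selected by Madow's systematic sampling scheme given the uniform draw `U`:
with cumulative sums `Π j = ∑_{l < j} p l`, element `j` (0-indexed) is selected iff there is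
an integer `0 ≤ i < k` with `Π j ≤ U + i < Π (j+1)`. -/
noncomputable def madowSet (N k : ℕ) (p : ℕ → ℝ) (U : ℝ) : Finset ℕ :=
  (Finset.range N).filter
    (fun j => ∃ i < k, (∑ l ∈ Finset.range j, p l) ≤ U + i ∧
        U + i < ∑ l ∈ Finset.range (j + 1), p l)

open Finset

lemma exists_lt_and_mem_Ico_succ {α : Type*} [LinearOrder α] (s : ℕ → α) {t : α} :
    ∀ {N : ℕ}, s 0 ≤ t → t < s N → ∃ j < N, t ∈ Set.Ico (s j) (s (j + 1))
  | 0, h0, hN => absurd h0 (not_le.2 hN)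
  | N + 1, h0, hN => by
    by_cases ht : t < s N
    · obtain ⟨j, hj, hjt⟩ := exists_lt_and_mem_Ico_succ s h0 ht
      exact ⟨j, by omega, hjt⟩
    · exact ⟨N, N.lt_succ_self, not_lt.1 ht, hN⟩

lemma existsUnique_lt_and_mem_Ico_succ {α : Type*} [LinearOrder α] {s : ℕ → α} {N : ℕ}
    (hs : MonotoneOn s (Set.Iic N)) {t : α} (h0 : s 0 ≤ t) (hN : t < s N) :
    ∃! j, j < N ∧ t ∈ Set.Ico (s j) (s (j + 1)) := by
  obtain ⟨j, hj, hjt⟩ := exists_lt_and_mem_Ico_succ s h0 hN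
  refine ⟨j, ⟨hj, hjt⟩, fun j' ⟨hj', hj't⟩ => ?_⟩
  have le_of_mem {m n : ℕ} (hn : n < N) (hm : t < s (m + 1)) (hn' : s n ≤ t) : n ≤ m :=
    not_lt.1 fun hmn =>
      (hm.trans_le (hs (Set.mem_Iic.2 (by omega)) (Set.mem_Iic.2 hn.le) hmn)).not_ge hn'
  exact le_antisymm (le_of_mem hj' hjt.2 hj't.1) (le_of_mem hj hj't.2 hjt.1)

lemma monotoneOn_sum_range {p : ℕ → ℝ} {N : ℕ} (hp : ∀ i < N, 0 ≤ p i) :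
    MonotoneOn (fun j => ∑ l ∈ range j, p l) (Set.Iic N) :=
  fun _ _ _ hn hmn => sum_le_sum_of_subset_of_nonneg (range_subset_range.2 hmn)
    fun l hl _ => hp l ((mem_range.1 hl).trans_le hn)

lemma eq_of_add_natCast_mem_Ico {a b x : ℝ} (hab : b ≤ a + 1) {i i' : ℕ}
    (hi : x + i ∈ Set.Ico a b) (hi' : x + i' ∈ Set.Ico a b) : i = i' := by
  have lt_succ {m n : ℕ} (hm : x + m ∈ Set.Ico a b) (hn : x + n ∈ Set.Ico a b) :
      m < n + 1 := by
    have : (m : ℝ) < n + 1 := by linarith [hm.2, hn.1]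
    exact_mod_cast this
  have := lt_succ hi hi'
  have := lt_succ hi' hi
  omega

lemma volume_setOf_exists_add_natCast_mem_Ico {a b : ℝ} {k : ℕ} (ha : 0 ≤ a)
    (hab : b ≤ a + 1) (hbk : b ≤ k) :
    volume {x ∈ Set.Ico (0 : ℝ) 1 | ∃ i < k, x + i ∈ Set.Ico a b} =
      ENNReal.ofReal (b - a) := by
  have hpieces : {x ∈ Set.Ico (0 : ℝ) 1 | ∃ i < k, x + i ∈ Set.Ico a b} =
      ⋃ i ∈ range k, (· + (i : ℝ)) ⁻¹' (Set.Ico (i : ℝ) (i + 1) ∩ Set.Ico a b) := by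
    ext x
    simp only [Set.mem_ofPred_eq, Set.mem_iUnion, Set.mem_preimage, Set.mem_inter_iff, mem_range,
      exists_prop, Set.mem_Ico]
    constructor
    · rintro ⟨⟨h0, h1⟩, i, hi, hx⟩
      exact ⟨i, hi, ⟨by linarith, by linarith⟩, hx⟩
    · rintro ⟨i, hi, ⟨h0, h1⟩, hx⟩
      exact ⟨⟨by linarith, by linarith⟩, i, hi, hx⟩
  have hcover : ⋃ i ∈ range k, Set.Ico (i : ℝ) (i + 1) ∩ Set.Ico a b = Set.Ico a b := by
    refine subset_antisymm (Set.iUnion₂_subset fun _ _ => Set.inter_subset_right) fun x hx => ?_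
    have hx0 : 0 ≤ x := ha.trans hx.1
    exact Set.mem_biUnion (mem_range.2 ((Nat.floor_lt hx0).2 (hx.2.trans_le hbk)))
      ⟨⟨Nat.floor_le hx0, Nat.lt_floor_add_one x⟩, hx⟩
  have hdisj : (range k : Set ℕ).PairwiseDisjoint
      fun i => Set.Ico (i : ℝ) (i + 1) ∩ Set.Ico a b := by
    intro i _ i' _ hne
    refine Set.disjoint_left.2 fun x hx hx' => hne ?_
    rw [← Nat.floor_eq_on_Ico i x hx.1, ← Nat.floor_eq_on_Ico i' x hx'.1]
  have hdisj' : (range k : Set ℕ).PairwiseDisjoint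
      fun i => (· + (i : ℝ)) ⁻¹' (Set.Ico (i : ℝ) (i + 1) ∩ Set.Ico a b) := by
    intro i _ i' _ hne
    exact Set.disjoint_left.2 fun x hx hx' => hne (eq_of_add_natCast_mem_Ico hab hx.2 hx'.2)
  have hmeas (i : ℕ) : MeasurableSet (Set.Ico (i : ℝ) (i + 1) ∩ Set.Ico a b) :=
    measurableSet_Ico.inter measurableSet_Ico
  rw [hpieces, measure_biUnion_finset hdisj' fun i _ => (hmeas i).preimage (measurable_add_const _)]
  simp only [measure_preimage_add_right]
  rw [← measure_biUnion_finset hdisj fun i _ => hmeas i, hcover, Real.volume_Ico]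

section Madow

variable {N k : ℕ} {p : ℕ → ℝ}

lemma card_madowSet (hp : ∀ i < N, 0 ≤ p i ∧ p i ≤ 1) (hsum : ∑ i ∈ range N, p i = k)
    {U : ℝ} (hU : U ∈ Set.Ico (0 : ℝ) 1) : (madowSet N k p U).card = k := by
  have hmono := monotoneOn_sum_range fun i hi => (hp i hi).1
  have hlevel : ∀ i < k, ∃! j, j < N ∧
      U + i ∈ Set.Ico (∑ l ∈ range j, p l) (∑ l ∈ range (j + 1), p l) := by
    intro i hi
    have hik : (i : ℝ) + 1 ≤ k := by exact_mod_cast hi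
    refine existsUnique_lt_and_mem_Ico_succ hmono ?_ ?_
    · simpa using add_nonneg hU.1 i.cast_nonneg
    · rw [hsum]; linarith [hU.2]
  choose! J hJ hJ_unique using hlevel
  refine (card_nbij J (fun i hi => ?_) (fun i hi i' hi' hii' => ?_) fun j hj => ?_).symm.trans
    (card_range k)
  · have hi := mem_range.1 hi
    exact mem_filter.2 ⟨mem_range.2 (hJ i hi).1, i, hi, (hJ i hi).2⟩
  · have hi := mem_range.1 hi
    have hstep : ∑ l ∈ range (J i + 1), p l ≤ ∑ l ∈ range (J i), p l + 1 := by
      rw [sum_range_succ]; linarith [(hp (J i) (hJ i hi).1).2]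
    exact eq_of_add_natCast_mem_Ico hstep (hJ i hi).2 (hii' ▸ (hJ i' (mem_range.1 hi')).2)
  · obtain ⟨hjN, i, hi, hij⟩ := mem_filter.1 hj
    exact ⟨i, mem_range.2 hi, (hJ_unique i hi j ⟨mem_range.1 hjN, hij⟩).symm⟩

lemma volume_setOf_mem_madowSet (hp : ∀ i < N, 0 ≤ p i ∧ p i ≤ 1)
    (hsum : ∑ i ∈ range N, p i = k) {j : ℕ} (hj : j < N) :
    volume {U ∈ Set.Ico (0 : ℝ) 1 | j ∈ madowSet N k p U} = ENNReal.ofReal (p j) := by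
  have hmono := monotoneOn_sum_range fun i hi => (hp i hi).1
  have hstart : 0 ≤ ∑ l ∈ range j, p l := by
    simpa using hmono (Set.mem_Iic.2 N.zero_le) (Set.mem_Iic.2 hj.le) j.zero_le
  have hend : ∑ l ∈ range (j + 1), p l ≤ k :=
    hsum ▸ hmono (Set.mem_Iic.2 hj) (Set.mem_Iic.2 le_rfl) hj
  have hstep : ∑ l ∈ range (j + 1), p l = ∑ l ∈ range j, p l + p j := sum_range_succ p j
  have hset : {U ∈ Set.Ico (0 : ℝ) 1 | j ∈ madowSet N k p U} =
      {U ∈ Set.Ico (0 : ℝ) 1 | ∃ i < k,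
        U + i ∈ Set.Ico (∑ l ∈ range j, p l) (∑ l ∈ range (j + 1), p l)} := by
    simp only [madowSet, mem_filter, mem_range, hj, true_and, Set.mem_Ico]
  rw [hset, volume_setOf_exists_add_natCast_mem_Ico hstart (by linarith [(hp j hj).2]) hend,
    hstep, add_sub_cancel_left]

end Madow

theorem stmt_1_general (N k : ℕ) (p : ℕ → ℝ)
    (hp : ∀ i < N, 0 ≤ p i ∧ p i ≤ 1)
    (hsum : ∑ i ∈ Finset.range N, p i = k) :
    (∀ U ∈ Set.Ico (0 : ℝ) 1, (madowSet N k p U).card = k) ∧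
      (∀ j < N,
        volume {U ∈ Set.Ico (0 : ℝ) 1 | j ∈ madowSet N k p U} = ENNReal.ofReal (p j)) :=
  ⟨fun _ hU => card_madowSet hp hsum hU, fun _ hj => volume_setOf_mem_madowSet hp hsum hj⟩

/-- Correctness of Madow's sampling scheme: if `p ∈ [0,1]^N` with
`∑_{i<N} p i = k`, then for every `U ∈ [0,1)` the selected set has exactly `k` elements,
and when `U` is uniform on `[0,1]` the probability that `j` is selected equals `p j`. -/
theorem stmt_1 (N k : ℕ) (hk : 1 ≤ k) (hkN : k ≤ N) (p : ℕ → ℝ)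
    (hp : ∀ i < N, 0 ≤ p i ∧ p i ≤ 1)
    (hsum : ∑ i ∈ Finset.range N, p i = k) :
    (∀ U ∈ Set.Ico (0 : ℝ) 1, (madowSet N k p U).card = k) ∧
      (∀ j < N,
        volume {U ∈ Set.Ico (0 : ℝ) 1 | j ∈ madowSet N k p U} = ENNReal.ofReal (p j)) :=
  stmt_1_general N k p hp hsum
end

section
/- Given a stable loss function φ: [N]^T → [0,1] with E φ(z) ≥ 1 - k/N under the i.i.d. uniform measure on [N]^T, the vector defined by p_{t,i}(y^{t-1}) = T(φ_{t-1}(y^{t-1}) - φ_t(y^{t-1} i)) + k/N, where φ_t(y^t) = E φ(y^t, ε_{t+1}^T) for ε i.i.d. uniform on [N], satisfies ∑_{i=1}^N p_{t,i}(y^{t-1}) = k and 0 ≤ p_{t,i}(y^{t-1}) ≤ 1 for all i, t, and prefixes y^{t-1}. -/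
open scoped Classical

/-!
The increment `φ_t(y) - φ_{t+1}(y^{t-1} i)` is itself a conditional expectation given the first
`t + 1` coordinates, namely of `z ↦ (1/N) ∑_j φ(z with z_t := j) - φ(z with z_t := i)`: the
first term because averaging out coordinate `t` and then conditioning on the first `t + 1`
coordinates is conditioning on the first `t`. Stability bounds this function pointwise by
`-k/(NT)` and `(1 - k/N)/T`, and averaging preserves such bounds, which gives `0 ≤ p ≤ 1`. The
sum identity is the tower property `N φ_t(y) = ∑_i φ_{t+1}(y^{t-1} i)`.
-/

/-- The potential function `φ_m`: the conditional expectation of `φ` given the first `m`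
coordinates of `y`, averaging the remaining `T - m` coordinates i.i.d. uniformly over `[N]`:
`φ_m(y) = (1/N^{T-m}) ∑_{z : z_s = y_s ∀ s < m} φ(z)`. -/
noncomputable def phiCond (N T : ℕ) (φ : (Fin T → Fin N) → ℝ) (m : ℕ)
    (y : Fin T → Fin N) : ℝ :=
  (1 / (N : ℝ) ^ (T - m)) *
    ∑ z : Fin T → Fin N, if ∀ s : Fin T, (s : ℕ) < m → z s = y s then φ z else 0

open Finset Function

section PrefixCylinder

variable {N T : ℕ}

def prefixCylinder (m : ℕ) (y : Fin T → Fin N) : Finset (Fin T → Fin N) :=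
  {z | ∀ s : Fin T, (s : ℕ) < m → z s = y s}

theorem card_prefixCylinder (m : ℕ) (y : Fin T → Fin N) :
    #(prefixCylinder m y) = N ^ (T - m) := by
  have hpi : prefixCylinder m y =
      Fintype.piFinset fun s : Fin T => if (s : ℕ) < m then {y s} else univ := by
    ext z
    simp only [prefixCylinder, mem_filter, mem_univ, true_and, Fintype.mem_piFinset]
    refine forall_congr' fun s => ?_
    split_ifs <;> simp [*]
  rw [hpi, Fintype.card_piFinset]
  simp only [apply_ite card, card_singleton, card_univ, Fintype.card_fin]
  rw [prod_ite, prod_const_one, one_mul, prod_const, filter_not,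
    card_sdiff_of_subset (filter_subset _ _), card_univ, Fintype.card_fin, Fin.card_filter_val_lt]
  congr 1
  omega

theorem prefixCylinder_succ_update (t : Fin T) (i : Fin N) (y : Fin T → Fin N) :
    prefixCylinder (t + 1) (update y t i) = {z ∈ prefixCylinder t y | z t = i} := by
  ext z
  simp only [prefixCylinder, mem_filter, mem_univ, true_and]
  constructor
  · intro h
    refine ⟨fun s hs => ?_, by simpa using h t (by omega)⟩
    simpa [update_of_ne (Fin.ne_of_lt hs)] using h s (by omega)
  · rintro ⟨h, rfl⟩ s hs
    rcases eq_or_ne s t with rfl | hst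
    · simp
    · rw [update_of_ne hst]
      exact h s (by omega)

theorem update_mem_prefixCylinder_succ {t : Fin T} {i : Fin N} {y z : Fin T → Fin N}
    (hz : z ∈ prefixCylinder (t + 1) (update y t i)) (j : Fin N) :
    update z t j ∈ prefixCylinder (t + 1) (update y t j) := by
  rw [prefixCylinder_succ_update] at hz ⊢
  simp only [prefixCylinder, mem_filter, mem_univ, true_and] at hz ⊢
  exact ⟨fun s hs => by simpa [update_of_ne (Fin.ne_of_lt hs)] using hz.1 s hs, by simp⟩

theorem sum_prefixCylinder_eq_sum_succ (f : (Fin T → Fin N) → ℝ) (t : Fin T)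
    (y : Fin T → Fin N) :
    ∑ z ∈ prefixCylinder t y, f z = ∑ i, ∑ z ∈ prefixCylinder (t + 1) (update y t i), f z := by
  simp only [prefixCylinder_succ_update]
  exact (sum_fiberwise _ _ _).symm

theorem sum_prefixCylinder_succ_comp_update (f : (Fin T → Fin N) → ℝ) (t : Fin T)
    (i j : Fin N) (y : Fin T → Fin N) :
    ∑ z ∈ prefixCylinder (t + 1) (update y t i), f (update z t j) =
      ∑ z ∈ prefixCylinder (t + 1) (update y t j), f z := by
  have hcoord {z : Fin T → Fin N} {i : Fin N} (hz : z ∈ prefixCylinder (t + 1) (update y t i)) :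
      z t = i := by
    rw [prefixCylinder_succ_update, mem_filter] at hz
    exact hz.2
  refine sum_nbij' (update · t j) (update · t i) (fun z hz => update_mem_prefixCylinder_succ hz j)
    (fun z hz => update_mem_prefixCylinder_succ hz i) (fun z hz => ?_) (fun z hz => ?_)
    (fun _ _ => rfl)
  · simp [← hcoord hz]
  · simp [← hcoord hz]

end PrefixCylinder

section PhiCond

variable {N T : ℕ}

theorem phiCond_eq_sum_prefixCylinder (φ : (Fin T → Fin N) → ℝ) (m : ℕ) (y : Fin T → Fin N) :
    phiCond N T φ m y = (1 / (N : ℝ) ^ (T - m)) * ∑ z ∈ prefixCylinder m y, φ z := by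
  rw [phiCond, prefixCylinder, sum_filter]

theorem phiCond_sub (f g : (Fin T → Fin N) → ℝ) (m : ℕ) (y : Fin T → Fin N) :
    phiCond N T (fun z => f z - g z) m y = phiCond N T f m y - phiCond N T g m y := by
  simp only [phiCond_eq_sum_prefixCylinder, sum_sub_distrib, mul_sub]

theorem phiCond_const_mul (c : ℝ) (f : (Fin T → Fin N) → ℝ) (m : ℕ) (y : Fin T → Fin N) :
    phiCond N T (fun z => c * f z) m y = c * phiCond N T f m y := by
  simp only [phiCond_eq_sum_prefixCylinder, ← mul_sum]
  ring

theorem phiCond_sum {ι : Type*} (s : Finset ι) (f : ι → (Fin T → Fin N) → ℝ) (m : ℕ)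
    (y : Fin T → Fin N) :
    phiCond N T (fun z => ∑ j ∈ s, f j z) m y = ∑ j ∈ s, phiCond N T (f j) m y := by
  simp only [phiCond_eq_sum_prefixCylinder, ← mul_sum]
  rw [sum_comm]

theorem phiCond_mono {f g : (Fin T → Fin N) → ℝ} (h : ∀ z, f z ≤ g z) (m : ℕ)
    (y : Fin T → Fin N) : phiCond N T f m y ≤ phiCond N T g m y := by
  simp only [phiCond_eq_sum_prefixCylinder]
  gcongr with z
  exact h z

theorem phiCond_const (hN : 0 < N) (c : ℝ) (m : ℕ) (y : Fin T → Fin N) :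
    phiCond N T (fun _ => c) m y = c := by
  have : (N : ℝ) ^ (T - m) ≠ 0 := by positivity
  rw [phiCond_eq_sum_prefixCylinder, sum_const, card_prefixCylinder, nsmul_eq_mul]
  push_cast
  field_simp

theorem phiCond_succ_comp_update (φ : (Fin T → Fin N) → ℝ) (t : Fin T) (i j : Fin N)
    (y : Fin T → Fin N) :
    phiCond N T (fun z => φ (update z t j)) (t + 1) (update y t i) =
      phiCond N T φ (t + 1) (update y t j) := by
  simp only [phiCond_eq_sum_prefixCylinder, sum_prefixCylinder_succ_comp_update]

theorem sum_phiCond_succ_update (φ : (Fin T → Fin N) → ℝ) (t : Fin T) (y : Fin T → Fin N) :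
    ∑ i, phiCond N T φ (t + 1) (update y t i) = N * phiCond N T φ t y := by
  have hexp : T - (t : ℕ) = T - (t + 1) + 1 := by omega
  simp only [phiCond_eq_sum_prefixCylinder, ← mul_sum, ← sum_prefixCylinder_eq_sum_succ, hexp]
  have hN : (N : ℝ) ≠ 0 := by exact_mod_cast (y t).pos.ne'
  field_simp
  ring

theorem phiCond_sub_phiCond_succ_update (φ : (Fin T → Fin N) → ℝ) (t : Fin T) (i : Fin N)
    (y : Fin T → Fin N) :
    phiCond N T φ t y - phiCond N T φ (t + 1) (update y t i) =
      phiCond N T (fun z => 1 / N * ∑ j, φ (update z t j) - φ (update z t i)) (t + 1)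
        (update y t i) := by
  have hN : (N : ℝ) ≠ 0 := by exact_mod_cast i.pos.ne'
  rw [phiCond_sub, phiCond_const_mul, phiCond_sum]
  simp only [phiCond_succ_comp_update, sum_phiCond_succ_update]
  field_simp

end PhiCond

theorem stmt_3_general (N T k : ℕ)
    (φ : (Fin T → Fin N) → ℝ)
    (hstab1 : ∀ (y : Fin T → Fin N) (t : Fin T) (i : Fin N),
      φ (Function.update y t i) - (1 / (N : ℝ)) * ∑ j : Fin N, φ (Function.update y t j)
        ≤ k / ((N : ℝ) * T))
    (hstab2 : ∀ (y : Fin T → Fin N) (t : Fin T) (i : Fin N),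
      (1 / (N : ℝ)) * (∑ j : Fin N, φ (Function.update y t j)) - φ (Function.update y t i)
        ≤ (1 - (k : ℝ) / N) / T)
    (p : Fin T → Fin N → (Fin T → Fin N) → ℝ)
    (hp : ∀ (t : Fin T) (i : Fin N) (y : Fin T → Fin N),
      p t i y = T * (phiCond N T φ t y - phiCond N T φ (t + 1) (Function.update y t i))
          + (k : ℝ) / N) :
    ∀ (t : Fin T) (y : Fin T → Fin N),
      (∑ i : Fin N, p t i y) = k ∧ ∀ i : Fin N, 0 ≤ p t i y ∧ p t i y ≤ 1 := by
  intro t y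
  have hN : 0 < N := (y t).pos
  have hNR : (N : ℝ) ≠ 0 := by positivity
  have hTR : (0 : ℝ) < T := by exact_mod_cast t.pos
  refine ⟨?_, fun i => ⟨?_, ?_⟩⟩
  · simp only [hp, sum_add_distrib, ← mul_sum, sum_sub_distrib, sum_phiCond_succ_update, sum_const,
      card_univ, Fintype.card_fin, nsmul_eq_mul]
    field_simp
    ring
  · have hlow : -(k / ((N : ℝ) * T)) ≤
        phiCond N T φ t y - phiCond N T φ (t + 1) (update y t i) := by
      rw [phiCond_sub_phiCond_succ_update, ← phiCond_const hN (-(k / ((N : ℝ) * T)))]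
      exact phiCond_mono (fun z => by linarith [hstab1 z t i]) _ _
    calc (0 : ℝ) = T * -(k / ((N : ℝ) * T)) + k / N := by field_simp; ring
      _ ≤ p t i y := by rw [hp]; gcongr
  · have hup : phiCond N T φ t y - phiCond N T φ (t + 1) (update y t i) ≤
        (1 - (k : ℝ) / N) / T := by
      rw [phiCond_sub_phiCond_succ_update, ← phiCond_const hN ((1 - (k : ℝ) / N) / T)]
      exact phiCond_mono (fun z => hstab2 z t i) _ _
    calc p t i y ≤ T * ((1 - (k : ℝ) / N) / T) + k / N := by rw [hp]; gcongr
      _ = 1 := by field_simp; ring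

/-- Given a stable loss function `φ : [N]^T → [0,1]` with
`E φ(z) ≥ 1 - k/N` under the i.i.d. uniform measure, the vector
`p_{t,i}(y^{t-1}) = T (φ_{t-1}(y^{t-1}) - φ_t(y^{t-1} i)) + k/N` satisfies
`∑ i, p_{t,i} = k` and `0 ≤ p_{t,i} ≤ 1` for all rounds `t` and prefixes. -/
theorem stmt_3 (N T k : ℕ) (hk : 1 ≤ k) (hkN : k ≤ N) (hT : 1 ≤ T)
    (φ : (Fin T → Fin N) → ℝ)
    (hrange : ∀ y, 0 ≤ φ y ∧ φ y ≤ 1)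
    (hstab1 : ∀ (y : Fin T → Fin N) (t : Fin T) (i : Fin N),
      φ (Function.update y t i) - (1 / (N : ℝ)) * ∑ j : Fin N, φ (Function.update y t j)
        ≤ k / ((N : ℝ) * T))
    (hstab2 : ∀ (y : Fin T → Fin N) (t : Fin T) (i : Fin N),
      (1 / (N : ℝ)) * (∑ j : Fin N, φ (Function.update y t j)) - φ (Function.update y t i)
        ≤ (1 - (k : ℝ) / N) / T)
    (hmean : (1 / (N : ℝ) ^ T) * ∑ z : Fin T → Fin N, φ z ≥ 1 - (k : ℝ) / N)
    (p : Fin T → Fin N → (Fin T → Fin N) → ℝ)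
    (hp : ∀ (t : Fin T) (i : Fin N) (y : Fin T → Fin N),
      p t i y = T * (phiCond N T φ t y - phiCond N T φ (t + 1) (Function.update y t i))
          + (k : ℝ) / N) :
    ∀ (t : Fin T) (y : Fin T → Fin N),
      (∑ i : Fin N, p t i y) = k ∧ ∀ i : Fin N, 0 ≤ p t i y ∧ p t i y ≤ 1 :=
  stmt_3_general N T k φ hstab1 hstab2 p hp
end

section
/- A stable loss function φ: [N]^T → [0,1] is achievable by an online k-set prediction policy (i.e., there exists a policy whose expected fraction of mistakes on any sequence y is at most φ(y)) if and only if E φ(z) ≥ 1 - k/N, where the expectation is over z drawn i.i.d. uniformly from [N]^T. -/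
/-!
An online policy cannot see `y t` when it predicts round `t`, so averaging over `y t` it covers
`y t` with probability exactly `k / N`: every online policy has mean mistake fraction `1 - k / N`,
which gives necessity.

For sufficiency, let `M t y` be the mean of `φ` over the sequences agreeing with `y` before `t`
(a Doob martingale, with `M 0 = E φ` and `M T y = φ y`). At round `t` the policy covers `i` with
probability `k / N - T (M (t + 1) (y[t ↦ i]) - M t y)`. Stability says exactly that these numbers
lie in `[0, 1]`; they sum to `k`, so they form a point of the hypersimplex, whose extreme points
are indicators of `k`-sets, and by Krein–Milman they are the inclusion probabilities of a random
`k`-set. The mistake fraction then telescopes to `1 - k / N + φ y - E φ ≤ φ y`.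
-/

open scoped Classical

/-- The expected mistake fraction of an online `k`-set prediction policy `A` (which outputs
at round `t` a random `k`-subset distributed as `A t y`, depending only on the prefix
`y 1, ..., y (t-1)`) on the sequence `y`:
`μ_A(y) = (1/T) ∑_t P(y t ∉ S t)`. -/
noncomputable def mistakeFraction {N T k : ℕ}
    (A : Fin T → (Fin T → Fin N) → PMF {s : Finset (Fin N) // s.card = k})
    (y : Fin T → Fin N) : ℝ :=
  (1 / (T : ℝ)) * ∑ t : Fin T,
    (1 - ∑ s : {s : Finset (Fin N) // s.card = k},
      if y t ∈ s.1 then ((A t y) s).toReal else 0)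

open Finset Function
open scoped BigOperators

section Convex

variable {E : Type*} [AddCommGroup E] [Module ℝ E]

theorem eq_zero_of_mem_extremePoints {A : Set E} {x d : E} (hx : x ∈ A.extremePoints ℝ)
    (hadd : x + d ∈ A) (hsub : x - d ∈ A) : d = 0 := by
  have hmid : x ∈ openSegment ℝ (x + d) (x - d) :=
    ⟨1 / 2, 1 / 2, by norm_num, by norm_num, by norm_num, by module⟩
  simpa using ((mem_extremePoints.1 hx).2 _ hadd _ hsub hmid).1

theorem exists_weights_of_mem_convexHull_range {ι : Type*} [Fintype ι] {v : ι → E} {x : E}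
    (hx : x ∈ convexHull ℝ (Set.range v)) :
    ∃ w : ι → ℝ, (∀ i, 0 ≤ w i) ∧ ∑ i, w i = 1 ∧ ∑ i, w i • v i = x := by
  rw [convexHull_range_eq_exists_affineCombination] at hx
  obtain ⟨s, w, hw₀, hw₁, rfl⟩ := hx
  refine ⟨fun i => if i ∈ s then w i else 0, fun i => ?_, ?_, ?_⟩
  · dsimp only
    split_ifs with hi
    exacts [hw₀ i hi, le_rfl]
  · rw [sum_ite_mem, univ_inter, hw₁]
  · rw [s.affineCombination_eq_linear_combination v w hw₁]
    simp [ite_smul, sum_ite_mem]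

end Convex

def hypersimplex (α : Type*) [Fintype α] (k : ℕ) : Set (α → ℝ) :=
  Set.Icc 0 1 ∩ {p | ∑ i, p i = k}

section Hypersimplex

variable {α : Type*} [Fintype α] {k : ℕ}

theorem isCompact_hypersimplex : IsCompact (hypersimplex α k) :=
  isCompact_Icc.inter_right (isClosed_eq (by fun_prop) continuous_const)

theorem convex_hypersimplex : Convex ℝ (hypersimplex α k) := by
  refine (convex_Icc 0 1).inter fun p hp q hq a b _ _ hab => ?_
  simp only [Set.mem_ofPred_eq, Pi.add_apply, Pi.smul_apply, smul_eq_mul, sum_add_distrib,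
    ← mul_sum] at hp hq ⊢
  rw [hp, hq, ← add_mul, hab, one_mul]

/-- Otherwise the other coordinates would be `0` or `1`, and the integer `k` would be
an integer plus `p i ∈ (0, 1)`. -/
theorem exists_ne_mem_Ioo_of_mem_hypersimplex {p : α → ℝ} (hp : p ∈ hypersimplex α k) {i : α}
    (hi : p i ∈ Set.Ioo 0 1) : ∃ j ≠ i, p j ∈ Set.Ioo 0 1 := by
  by_contra! h
  have hbool : ∀ j ∈ univ.erase i, p j = if p j = 1 then 1 else 0 := by
    intro j hj
    split_ifs with h1
    · exact h1
    · have hlt : p j < 1 := lt_of_le_of_ne (hp.1.2 j) h1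
      exact le_antisymm (not_lt.1 fun h0 => h j (ne_of_mem_erase hj) ⟨h0, hlt⟩) (hp.1.1 j)
  have hsum : p i + #((univ.erase i).filter (p · = 1)) = k := by
    rw [← hp.2, ← add_sum_erase _ _ (mem_univ i), sum_congr rfl hbool, sum_boole]
  generalize #((univ.erase i).filter (p · = 1)) = m at hsum
  have hlt : (m : ℝ) < k := by linarith [hi.1]
  have hgt : (k : ℝ) < m + 1 := by linarith [hi.2]
  norm_cast at hlt hgt
  omega

/-- Two fractional coordinates `i`, `j` can be moved by `±ε` in opposite directions. -/
theorem eq_zero_or_eq_one_of_mem_extremePoints_hypersimplex {p : α → ℝ}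
    (hp : p ∈ (hypersimplex α k).extremePoints ℝ) (i : α) : p i = 0 ∨ p i = 1 := by
  by_contra! hi
  have hi' : p i ∈ Set.Ioo 0 1 :=
    ⟨lt_of_le_of_ne (hp.1.1.1 i) hi.1.symm, lt_of_le_of_ne (hp.1.1.2 i) hi.2⟩
  obtain ⟨j, hji, hj⟩ := exists_ne_mem_Ioo_of_mem_hypersimplex hp.1 hi'
  set ε := min (min (p i) (1 - p i)) (min (p j) (1 - p j))
  have hε : 0 < ε := by
    simp only [ε, lt_min_iff, sub_pos]
    exact ⟨⟨hi'.1, hi'.2⟩, hj.1, hj.2⟩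
  have hεi : ε ≤ p i ∧ ε ≤ 1 - p i :=
    ⟨(min_le_left _ _).trans (min_le_left _ _), (min_le_left _ _).trans (min_le_right _ _)⟩
  have hεj : ε ≤ p j ∧ ε ≤ 1 - p j :=
    ⟨(min_le_right _ _).trans (min_le_left _ _), (min_le_right _ _).trans (min_le_right _ _)⟩
  have hmem : ∀ c, |c| ≤ ε → p + (Pi.single i c - Pi.single j c) ∈ hypersimplex α k := by
    intro c hc
    obtain ⟨hc₁, hc₂⟩ := abs_le.1 hc
    have hcoord : ∀ l, p l + (Pi.single i c - Pi.single j c : α → ℝ) l ∈ Set.Icc 0 1 := by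
      intro l
      have h0 := hp.1.1.1 l
      have h1 := hp.1.1.2 l
      rcases eq_or_ne l i with rfl | hli
      · simp only [Pi.sub_apply, Pi.single_eq_same, Pi.single_eq_of_ne hji.symm, Set.mem_Icc]
        constructor <;> linarith
      rcases eq_or_ne l j with rfl | hlj
      · simp only [Pi.sub_apply, Pi.single_eq_same, Pi.single_eq_of_ne hli, Set.mem_Icc]
        constructor <;> linarith
      · simp only [Pi.sub_apply, Pi.single_eq_of_ne hli, Pi.single_eq_of_ne hlj, sub_zero,
          add_zero, Set.mem_Icc]
        exact ⟨h0, h1⟩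
    refine ⟨⟨fun l => (hcoord l).1, fun l => (hcoord l).2⟩, ?_⟩
    simpa [sum_add_distrib, sum_sub_distrib] using hp.1.2
  have hd := eq_zero_of_mem_extremePoints hp (hmem ε (by rw [abs_of_pos hε])) (by
    convert hmem (-ε) (by rw [abs_neg, abs_of_pos hε]) using 1
    rw [Pi.single_neg, Pi.single_neg]
    abel)
  have := congrFun hd i
  simp only [Pi.sub_apply, Pi.single_eq_same, Pi.single_eq_of_ne hji.symm, sub_zero,
    Pi.zero_apply] at this
  exact hε.ne' this

variable [DecidableEq α]

def subsetIndicator (s : Finset α) : α → ℝ := fun i => if i ∈ s then 1 else 0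

theorem extremePoints_hypersimplex_subset :
    (hypersimplex α k).extremePoints ℝ ⊆
      Set.range fun s : {s : Finset α // s.card = k} => subsetIndicator s.1 := by
  intro p hp
  have hps : p = subsetIndicator (univ.filter (p · = 1)) := by
    funext i
    rcases eq_zero_or_eq_one_of_mem_extremePoints_hypersimplex hp i with h | h <;>
      simp [subsetIndicator, h]
  have hcard : #(univ.filter (p · = 1)) = k := by
    have := hp.1.2
    rw [hps] at this
    simpa [subsetIndicator] using this
  exact ⟨⟨_, hcard⟩, hps.symm⟩

theorem hypersimplex_subset_convexHull :
    hypersimplex α k ⊆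
      convexHull ℝ (Set.range fun s : {s : Finset α // s.card = k} => subsetIndicator s.1) :=
  calc hypersimplex α k
      = closure (convexHull ℝ ((hypersimplex α k).extremePoints ℝ)) :=
        (closure_convexHull_extremePoints isCompact_hypersimplex convex_hypersimplex).symm
    _ ⊆ closure (convexHull ℝ
          (Set.range fun s : {s : Finset α // s.card = k} => subsetIndicator s.1)) :=
        closure_mono (convexHull_mono extremePoints_hypersimplex_subset)
    _ = _ := ((Set.finite_range _).isClosed_convexHull ℝ).closure_eq

noncomputable def inclusionProb (P : PMF {s : Finset α // s.card = k}) (i : α) : ℝ :=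
  ∑ s : {s : Finset α // s.card = k}, if i ∈ s.1 then (P s).toReal else 0

theorem sum_inclusionProb (P : PMF {s : Finset α // s.card = k}) :
    ∑ i, inclusionProb P i = k := by
  have hP : ∑ s, (P s).toReal = 1 := by
    rw [← ENNReal.toReal_sum fun s _ => P.apply_ne_top s,
      ← tsum_fintype (L := SummationFilter.unconditional _), P.tsum_coe, ENNReal.toReal_one]
  calc ∑ i, inclusionProb P i
      = ∑ s : {s : Finset α // s.card = k}, (k : ℝ) * (P s).toReal := by
        unfold inclusionProb
        rw [sum_comm]
        refine sum_congr rfl fun s _ => ?_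
        rw [sum_ite_mem, univ_inter, sum_const, s.2, nsmul_eq_mul]
    _ = k := by rw [← mul_sum, hP, mul_one]

theorem exists_pmf_inclusionProb_eq {p : α → ℝ} (hp : p ∈ hypersimplex α k) :
    ∃ P : PMF {s : Finset α // s.card = k}, inclusionProb P = p := by
  obtain ⟨w, hw₀, hw₁, hwp⟩ :=
    exists_weights_of_mem_convexHull_range (hypersimplex_subset_convexHull hp)
  refine ⟨PMF.ofFintype (fun s => ENNReal.ofReal (w s)) ?_, ?_⟩
  · rw [← ENNReal.ofReal_sum_of_nonneg fun s _ => hw₀ s, hw₁, ENNReal.ofReal_one]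
  · funext i
    rw [← hwp]
    simp [inclusionProb, subsetIndicator, ENNReal.toReal_ofReal (hw₀ _), Finset.sum_apply]

end Hypersimplex

theorem expect_expect_update {ι β : Type*} [Fintype ι] [DecidableEq ι] [Fintype β]
    (f : (ι → β) → ℝ) (t : ι) : 𝔼 z, 𝔼 i, f (update z t i) = 𝔼 z, f z := by
  have hinv : Involutive fun q : (ι → β) × β => (update q.1 t q.2, q.1 t) := by
    rintro ⟨z, i⟩
    simp
  calc 𝔼 z, 𝔼 i, f (update z t i)
      = 𝔼 q : (ι → β) × β, f (update q.1 t q.2) := by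
        rw [← univ_product_univ, expect_product]
    _ = 𝔼 q : (ι → β) × β, f q.1 :=
        Fintype.expect_equiv hinv.toPerm _ _ fun q => by simp
    _ = 𝔼 z, f z := by
        rw [← univ_product_univ, expect_product]
        refine expect_congr rfl fun z _ => ?_
        have : Nonempty β := ⟨z t⟩
        exact Fintype.expect_const (f z)

section PrefixMean

variable {α : Type*} {T : ℕ}

def splice (t : ℕ) (y z : Fin T → α) : Fin T → α :=
  fun s => if (s : ℕ) < t then y s else z s

theorem splice_zero (y z : Fin T → α) : splice 0 y z = z := by
  funext s
  simp [splice]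

theorem splice_self (y z : Fin T → α) : splice T y z = y := by
  funext s
  simp [splice]

theorem splice_update_right (t : Fin T) (y z : Fin T → α) (i : α) :
    splice t y (update z t i) = update (splice t y z) t i := by
  funext s
  rcases eq_or_ne s t with rfl | hs
  · simp [splice]
  · simp [splice, update_of_ne hs]

theorem splice_succ_update_left (t : Fin T) (y z : Fin T → α) (i : α) :
    splice (t + 1) (update y t i) z = update (splice t y z) t i := by
  funext s
  rcases eq_or_ne s t with rfl | hs
  · simp [splice]
  · have : (s : ℕ) < t + 1 ↔ (s : ℕ) < t := by
      rw [Nat.lt_succ_iff, le_iff_lt_or_eq, Fin.val_eq_val, or_iff_left hs]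
    simp [splice, update_of_ne hs, this]

theorem splice_congr_left {t : ℕ} {y y' : Fin T → α} (h : ∀ s : Fin T, (s : ℕ) < t → y s = y' s)
    (z : Fin T → α) : splice t y z = splice t y' z := by
  funext s
  by_cases hs : (s : ℕ) < t <;> simp [splice, hs, h]

variable [Fintype α]

noncomputable def prefixMean (φ : (Fin T → α) → ℝ) (t : ℕ) (y : Fin T → α) : ℝ :=
  𝔼 z, φ (splice t y z)

variable (φ : (Fin T → α) → ℝ)

theorem prefixMean_zero (y : Fin T → α) : prefixMean φ 0 y = 𝔼 z, φ z := by
  simp [prefixMean, splice_zero]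

theorem prefixMean_self (y : Fin T → α) : prefixMean φ T y = φ y := by
  have : Nonempty (Fin T → α) := ⟨y⟩
  simp [prefixMean, splice_self]

theorem prefixMean_congr {t : ℕ} {y y' : Fin T → α} (h : ∀ s : Fin T, (s : ℕ) < t → y s = y' s) :
    prefixMean φ t y = prefixMean φ t y' := by
  simp only [prefixMean, splice_congr_left h]

theorem prefixMean_succ_update (t : Fin T) (y : Fin T → α) (i : α) :
    prefixMean φ (t + 1) (update y t i) = 𝔼 z, φ (update (splice t y z) t i) := by
  simp only [prefixMean, splice_succ_update_left]

theorem prefixMean_eq_expect_expect_update (t : Fin T) (y : Fin T → α) :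
    prefixMean φ t y = 𝔼 z, 𝔼 j, φ (update (splice t y z) t j) := by
  rw [prefixMean, ← expect_expect_update _ t]
  simp only [splice_update_right]

theorem expect_prefixMean_succ_update (t : Fin T) (y : Fin T → α) :
    𝔼 i, prefixMean φ (t + 1) (update y t i) = prefixMean φ t y := by
  simp only [prefixMean_succ_update, prefixMean_eq_expect_expect_update φ t y]
  exact expect_comm _ _ _

theorem prefixMean_succ_update_sub_le {c : ℝ} {t : Fin T}
    (h : ∀ w i, φ (update w t i) - 𝔼 j, φ (update w t j) ≤ c) (y : Fin T → α) (i : α) :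
    prefixMean φ (t + 1) (update y t i) - prefixMean φ t y ≤ c := by
  rw [prefixMean_succ_update, prefixMean_eq_expect_expect_update φ t y, ← expect_sub_distrib]
  exact expect_le ⟨y, mem_univ _⟩ fun z _ => h _ i

theorem prefixMean_sub_prefixMean_succ_update_le {c : ℝ} {t : Fin T}
    (h : ∀ w i, 𝔼 j, φ (update w t j) - φ (update w t i) ≤ c) (y : Fin T → α) (i : α) :
    prefixMean φ t y - prefixMean φ (t + 1) (update y t i) ≤ c := by
  rw [prefixMean_succ_update, prefixMean_eq_expect_expect_update φ t y, ← expect_sub_distrib]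
  exact expect_le ⟨y, mem_univ _⟩ fun z _ => h _ i

theorem sum_prefixMean_succ_sub (y : Fin T → α) :
    ∑ t : Fin T, (prefixMean φ (t + 1) y - prefixMean φ t y) = φ y - 𝔼 z, φ z := by
  rw [Fin.sum_univ_eq_sum_range (fun t => prefixMean φ (t + 1) y - prefixMean φ t y),
    sum_range_sub (fun t => prefixMean φ t y), prefixMean_self, prefixMean_zero]

end PrefixMean

section Policy

variable {α : Type*} {T k : ℕ}

def IsOnlinePolicy (A : Fin T → (Fin T → α) → PMF {s : Finset α // s.card = k}) : Prop :=
  ∀ (t : Fin T) (y y' : Fin T → α), (∀ s : Fin T, s < t → y s = y' s) → A t y = A t y'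

variable [Fintype α]

noncomputable def inclusionTarget (φ : (Fin T → α) → ℝ) (k : ℕ) (t : Fin T) (y : Fin T → α)
    (i : α) : ℝ :=
  k / Fintype.card α - T * (prefixMean φ (t + 1) (update y t i) - prefixMean φ t y)

theorem inclusionTarget_congr {φ : (Fin T → α) → ℝ} {t : Fin T} {y y' : Fin T → α}
    (h : ∀ s : Fin T, s < t → y s = y' s) : inclusionTarget φ k t y = inclusionTarget φ k t y' := by
  funext i
  simp only [inclusionTarget, prefixMean_succ_update]
  simp only [prefixMean, splice_congr_left h]

theorem inclusionTarget_mem_hypersimplex {φ : (Fin T → α) → ℝ}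
    (hstab₁ : ∀ w (t : Fin T) i,
      φ (update w t i) - 𝔼 j, φ (update w t j) ≤ k / (Fintype.card α * T))
    (hstab₂ : ∀ w (t : Fin T) i,
      𝔼 j, φ (update w t j) - φ (update w t i) ≤ (1 - k / Fintype.card α) / T)
    (t : Fin T) (y : Fin T → α) : inclusionTarget φ k t y ∈ hypersimplex α k := by
  have hT : (0 : ℝ) < T := by exact_mod_cast t.pos
  have hN : (0 : ℝ) < Fintype.card α := by exact_mod_cast Fintype.card_pos_iff.2 ⟨y t⟩
  refine ⟨⟨fun i => ?_, fun i => ?_⟩, ?_⟩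
  · have h := prefixMean_succ_update_sub_le φ (hstab₁ · t) y i
    have : T * (prefixMean φ (t + 1) (update y t i) - prefixMean φ t y) ≤ k / Fintype.card α :=
      calc _ ≤ (T : ℝ) * (k / (Fintype.card α * T)) := by gcongr
        _ = k / Fintype.card α := by field_simp
    simp only [inclusionTarget, Pi.zero_apply]
    linarith
  · have h := prefixMean_sub_prefixMean_succ_update_le φ (hstab₂ · t) y i
    have : T * (prefixMean φ t y - prefixMean φ (t + 1) (update y t i)) ≤ 1 - k / Fintype.card α :=
      calc _ ≤ (T : ℝ) * ((1 - k / Fintype.card α) / T) := by gcongr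
        _ = 1 - k / Fintype.card α := by field_simp
    simp only [inclusionTarget, Pi.one_apply]
    linarith
  · simp only [Set.mem_ofPred_eq, inclusionTarget]
    rw [sum_sub_distrib, ← mul_sum, sum_sub_distrib, ← Fintype.card_mul_expect
      (fun i => prefixMean φ (t + 1) (update y t i)), expect_prefixMean_succ_update]
    simp only [sum_const, card_univ, nsmul_eq_mul]
    field_simp
    ring

theorem IsOnlinePolicy.expect_inclusionProb_apply_self [DecidableEq α] [Nonempty α]
    {A : Fin T → (Fin T → α) → PMF {s : Finset α // s.card = k}} (hA : IsOnlinePolicy A)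
    (t : Fin T) : 𝔼 z, inclusionProb (A t z) (z t) = k / Fintype.card α := by
  have hupdate : ∀ z i, A t (update z t i) = A t z := fun z i =>
    hA t _ _ fun s hs => update_of_ne hs.ne _ _
  rw [← expect_expect_update _ t]
  simp only [update_self, hupdate, Fintype.expect_eq_sum_div_card (fun i => inclusionProb _ i),
    sum_inclusionProb, Fintype.expect_const]

end Policy

section MistakeFraction

variable {N T k : ℕ}

theorem mistakeFraction_eq_expect
    (A : Fin T → (Fin T → Fin N) → PMF {s : Finset (Fin N) // s.card = k}) (y : Fin T → Fin N) :
    mistakeFraction A y = 𝔼 t, (1 - inclusionProb (A t y) (y t)) := by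
  rw [mistakeFraction, Fintype.expect_eq_sum_div_card, Fintype.card_fin, one_div_mul_eq_div]
  rfl

theorem IsOnlinePolicy.expect_mistakeFraction
    {A : Fin T → (Fin T → Fin N) → PMF {s : Finset (Fin N) // s.card = k}} (hA : IsOnlinePolicy A)
    (hN : 0 < N) (hT : 0 < T) : 𝔼 y, mistakeFraction A y = 1 - k / N := by
  have : Nonempty (Fin N) := ⟨⟨0, hN⟩⟩
  have : Nonempty (Fin T) := ⟨⟨0, hT⟩⟩
  simp only [mistakeFraction_eq_expect]
  rw [expect_comm]
  simp only [expect_sub_distrib, Fintype.expect_const, hA.expect_inclusionProb_apply_self,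
    Fintype.card_fin]

theorem mistakeFraction_eq_of_inclusionProb_eq {φ : (Fin T → Fin N) → ℝ}
    {A : Fin T → (Fin T → Fin N) → PMF {s : Finset (Fin N) // s.card = k}}
    (hA : ∀ t y, inclusionProb (A t y) = inclusionTarget φ k t y) (hT : 0 < T) (y : Fin T → Fin N) :
    mistakeFraction A y = 1 - k / N + (φ y - 𝔼 z, φ z) := by
  have : Nonempty (Fin T) := ⟨⟨0, hT⟩⟩
  have hstep : ∀ t : Fin T, 1 - inclusionProb (A t y) (y t)
      = (1 - k / N) + T * (prefixMean φ (t + 1) y - prefixMean φ t y) := fun t => by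
    rw [hA, inclusionTarget, update_eq_self, Fintype.card_fin]
    ring
  rw [mistakeFraction_eq_expect, ← sum_prefixMean_succ_sub, ← Fintype.card_mul_expect,
    Fintype.card_fin]
  simp only [hstep, expect_add_distrib, Fintype.expect_const, mul_expect]

theorem exists_isOnlinePolicy_mistakeFraction_le {φ : (Fin T → Fin N) → ℝ} (hT : 0 < T)
    (hstab₁ : ∀ w (t : Fin T) i, φ (update w t i) - 𝔼 j, φ (update w t j) ≤ k / (N * T))
    (hstab₂ : ∀ w (t : Fin T) i, 𝔼 j, φ (update w t j) - φ (update w t i) ≤ (1 - k / N) / T)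
    (hE : 1 - k / N ≤ 𝔼 z, φ z) :
    ∃ A : Fin T → (Fin T → Fin N) → PMF {s : Finset (Fin N) // s.card = k},
      IsOnlinePolicy A ∧ ∀ y, mistakeFraction A y ≤ φ y := by
  choose Q hQ using fun p (hp : p ∈ hypersimplex (Fin N) k) => exists_pmf_inclusionProb_eq hp
  have hmem : ∀ t y, inclusionTarget φ k t y ∈ hypersimplex (Fin N) k :=
    inclusionTarget_mem_hypersimplex (by simpa using hstab₁) (by simpa using hstab₂)
  refine ⟨fun t y => Q _ (hmem t y), fun t y y' h => ?_, fun y => ?_⟩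
  · simp only [inclusionTarget_congr h]
  · rw [mistakeFraction_eq_of_inclusionProb_eq (fun t y => hQ _ (hmem t y)) hT]
    linarith

end MistakeFraction

theorem stmt_4_general (N T k : ℕ) (hk : 1 ≤ k) (hkN : k ≤ N) (hT : 1 ≤ T)
    (φ : (Fin T → Fin N) → ℝ)
    (hstab1 : ∀ (y : Fin T → Fin N) (t : Fin T) (i : Fin N),
      φ (Function.update y t i) - (1 / (N : ℝ)) * ∑ j : Fin N, φ (Function.update y t j)
        ≤ k / ((N : ℝ) * T))
    (hstab2 : ∀ (y : Fin T → Fin N) (t : Fin T) (i : Fin N),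
      (1 / (N : ℝ)) * (∑ j : Fin N, φ (Function.update y t j)) - φ (Function.update y t i)
        ≤ (1 - (k : ℝ) / N) / T) :
    (∃ A : Fin T → (Fin T → Fin N) → PMF {s : Finset (Fin N) // s.card = k},
      (∀ (t : Fin T) (y y' : Fin T → Fin N), (∀ s : Fin T, s < t → y s = y' s) →
        A t y = A t y') ∧
      (∀ y : Fin T → Fin N, mistakeFraction A y ≤ φ y))
    ↔ (1 / (N : ℝ) ^ T) * ∑ z : Fin T → Fin N, φ z ≥ 1 - (k : ℝ) / N := by
  have hmean : ∀ y (t : Fin T), 1 / (N : ℝ) * ∑ j, φ (update y t j) = 𝔼 j, φ (update y t j) :=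
    fun y t => by rw [Fintype.expect_eq_sum_div_card, one_div_mul_eq_div, Fintype.card_fin]
  have hEφ : 1 / (N : ℝ) ^ T * ∑ z, φ z = 𝔼 z, φ z := by
    rw [Fintype.expect_eq_sum_div_card, one_div_mul_eq_div]
    simp
  rw [hEφ, ge_iff_le]
  constructor
  · rintro ⟨A, hA, hμ⟩
    rw [← IsOnlinePolicy.expect_mistakeFraction hA (hk.trans hkN) hT]
    exact expect_le_expect fun y _ => hμ y
  · exact exists_isOnlinePolicy_mistakeFraction_le hT (fun y t i => hmean y t ▸ hstab1 y t i)
      (fun y t i => hmean y t ▸ hstab2 y t i)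

/-- A stable loss function `φ : [N]^T → [0,1]` is achievable by an online
`k`-set prediction policy (whose round-`t` output distribution depends only on
`y 1, ..., y (t-1)`) if and only if `E φ(z) ≥ 1 - k/N` for `z` i.i.d. uniform on `[N]^T`. -/
theorem stmt_4 (N T k : ℕ) (hk : 1 ≤ k) (hkN : k ≤ N) (hT : 1 ≤ T)
    (φ : (Fin T → Fin N) → ℝ)
    (hrange : ∀ y, 0 ≤ φ y ∧ φ y ≤ 1)
    (hstab1 : ∀ (y : Fin T → Fin N) (t : Fin T) (i : Fin N),
      φ (Function.update y t i) - (1 / (N : ℝ)) * ∑ j : Fin N, φ (Function.update y t j)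
        ≤ k / ((N : ℝ) * T))
    (hstab2 : ∀ (y : Fin T → Fin N) (t : Fin T) (i : Fin N),
      (1 / (N : ℝ)) * (∑ j : Fin N, φ (Function.update y t j)) - φ (Function.update y t i)
        ≤ (1 - (k : ℝ) / N) / T) :
    (∃ A : Fin T → (Fin T → Fin N) → PMF {s : Finset (Fin N) // s.card = k},
      (∀ (t : Fin T) (y y' : Fin T → Fin N), (∀ s : Fin T, s < t → y s = y' s) →
        A t y = A t y') ∧
      (∀ y : Fin T → Fin N, mistakeFraction A y ≤ φ y))
    ↔ (1 / (N : ℝ) ^ T) * ∑ z : Fin T → Fin N, φ z ≥ 1 - (k : ℝ) / N :=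
  stmt_4_general N T k hk hkN hT φ hstab1 hstab2
end

section
/- For positive weights w(1),...,w(N) and 1 ≤ k ≤ N, define p(i) = w(i) · e_{k-1}(w_{-i}) / e_k(w), where e_l denotes the elementary symmetric polynomial of order l and w_{-i} is the weight vector with the i-th coordinate removed. Then ∑_{i=1}^N p(i) = k and 0 ≤ p(i) ≤ 1 for all i. -/
/-!
Since `∂ e_k / ∂ w_i = e_{k-1}(w_{-i})`, the numerator of `p i` is `w_i ∂_i e_k`, and summing
over `i` gives `k e_k` by Euler's identity for the degree-`k` homogeneous polynomial `e_k`.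
The bound `p i ≤ 1` is the splitting `e_k(w) = e_k(w_{-i}) + w_i e_{k-1}(w_{-i})` according to
whether a `k`-subset contains `i`.
-/

/-- Elementary symmetric polynomial of order `l` of the weights `w` restricted to the
index set `s`: `e_l(w) = ∑_{I ⊆ s, |I| = l} ∏_{j ∈ I} w j`. -/
noncomputable def esymWeights {N : ℕ} (s : Finset (Fin N)) (l : ℕ) (w : Fin N → ℝ) : ℝ :=
  ∑ I ∈ s.powersetCard l, ∏ j ∈ I, w j

namespace Multiset
variable {R : Type*}

@[simp]
theorem esymm_zero [CommSemiring R] (s : Multiset R) : s.esymm 0 = 1 := by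
  simp [esymm]

theorem esymm_cons_succ [CommSemiring R] (a : R) (s : Multiset R) (n : ℕ) :
    (a ::ₘ s).esymm (n + 1) = s.esymm (n + 1) + a * s.esymm n := by
  simp [esymm, powersetCard_cons, map_map, sum_map_mul_left]

theorem esymm_nonneg [CommSemiring R] [PartialOrder R] [IsOrderedRing R] {s : Multiset R}
    (hs : ∀ a ∈ s, 0 ≤ a) (n : ℕ) : 0 ≤ s.esymm n :=
  sum_nonneg fun _ hx => by
    obtain ⟨t, ht, rfl⟩ := mem_map.1 hx
    exact prod_nonneg fun a ha => hs a (mem_of_le (mem_powersetCard.1 ht).1 ha)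

theorem esymm_pos [CommSemiring R] [PartialOrder R] [IsStrictOrderedRing R] {s : Multiset R}
    (hs : ∀ a ∈ s, 0 < a) {n : ℕ} (hn : n ≤ card s) : 0 < s.esymm n := by
  induction s using Multiset.induction_on generalizing n with
  | empty => simp_all
  | cons a t ih =>
    cases n with
    | zero => simp
    | succ m =>
      have ht : ∀ b ∈ t, 0 < b := fun b hb => hs b (mem_cons_of_mem hb)
      rw [esymm_cons_succ]
      exact add_pos_of_nonneg_of_pos (esymm_nonneg (fun b hb => (ht b hb).le) _)
        (mul_pos (hs a (mem_cons_self a t)) (ih ht (by simpa using hn)))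

end Multiset

namespace Finset
variable {ι R : Type*} [DecidableEq ι]

section CommSemiring
variable [CommSemiring R]

theorem esymm_map_val_succ_of_mem (w : ι → R) {s : Finset ι} {i : ι} (hi : i ∈ s) (n : ℕ) :
    (s.val.map w).esymm (n + 1) =
      ((s.erase i).val.map w).esymm (n + 1) + w i * ((s.erase i).val.map w).esymm n := by
  rw [erase_val, ← Multiset.esymm_cons_succ, ← Multiset.map_cons, Multiset.cons_erase hi]

theorem mul_sum_powersetCard_erase (s : Finset ι) (w : ι → R) (k : ℕ) {i : ι} (hi : i ∈ s) :
    w i * ∑ J ∈ (s.erase i).powersetCard k, ∏ j ∈ J, w j =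
      ∑ I ∈ s.powersetCard (k + 1) with i ∈ I, ∏ j ∈ I, w j := by
  rw [mul_sum]
  have hiJ : ∀ J ∈ (s.erase i).powersetCard k, i ∉ J := fun J hJ h =>
    notMem_erase i s ((mem_powersetCard.1 hJ).1 h)
  refine sum_nbij' (insert i) (·.erase i) (fun J hJ => ?_) (fun I hI => ?_)
    (fun J hJ => erase_insert (hiJ J hJ)) (fun I hI => insert_erase (mem_filter.1 hI).2)
    (fun J hJ => (prod_insert (hiJ J hJ)).symm)
  · simp only [mem_filter, mem_powersetCard] at hJ ⊢
    grind
  · simp only [mem_filter, mem_powersetCard] at hI ⊢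
    grind

theorem sum_mul_esymm_erase (s : Finset ι) (w : ι → R) (k : ℕ) :
    ∑ i ∈ s, w i * ((s.erase i).val.map w).esymm k = (k + 1) * (s.val.map w).esymm (k + 1) := by
  simp only [esymm_map_val]
  calc ∑ i ∈ s, w i * ∑ J ∈ (s.erase i).powersetCard k, ∏ j ∈ J, w j
      = ∑ i ∈ s, ∑ I ∈ s.powersetCard (k + 1) with i ∈ I, ∏ j ∈ I, w j :=
        sum_congr rfl fun i hi => mul_sum_powersetCard_erase s w k hi
    _ = ∑ I ∈ s.powersetCard (k + 1), ∑ i ∈ I, ∏ j ∈ I, w j := by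
        refine sum_comm' fun i I => ?_
        simp only [mem_filter, mem_powersetCard]
        grind
    _ = (k + 1) * ∑ I ∈ s.powersetCard (k + 1), ∏ j ∈ I, w j := by
        rw [mul_sum]
        refine sum_congr rfl fun I hI => ?_
        rw [sum_const, (mem_powersetCard.1 hI).2, nsmul_eq_mul, Nat.cast_succ]

end CommSemiring

theorem mul_esymm_erase_le [CommSemiring R] [PartialOrder R] [IsOrderedRing R] {w : ι → R}
    {s : Finset ι} (hw : ∀ i ∈ s, 0 ≤ w i) {i : ι} (hi : i ∈ s) (n : ℕ) :
    w i * ((s.erase i).val.map w).esymm n ≤ (s.val.map w).esymm (n + 1) := by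
  rw [esymm_map_val_succ_of_mem w hi]
  exact le_add_of_nonneg_left <| Multiset.esymm_nonneg
    (Multiset.forall_mem_map_iff.2 fun j hj => hw j (mem_of_mem_erase hj)) _

end Finset

open Finset

/-- For positive weights `w` and `1 ≤ k ≤ N`, the quantities
`p i = w i · e_{k-1}(w_{-i}) / e_k(w)` satisfy `∑ i, p i = k` and `0 ≤ p i ≤ 1`. -/
theorem stmt_5 (N k : ℕ) (hk : 1 ≤ k) (hkN : k ≤ N) (w : Fin N → ℝ)
    (hw : ∀ i, 0 < w i) (p : Fin N → ℝ)
    (hp : ∀ i, p i = w i * esymWeights (Finset.univ.erase i) (k - 1) w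
        / esymWeights Finset.univ k w) :
    (∑ i : Fin N, p i) = k ∧ ∀ i, 0 ≤ p i ∧ p i ≤ 1 := by
  obtain ⟨m, rfl⟩ := Nat.exists_eq_add_of_le' hk
  simp only [esymWeights, ← esymm_map_val, Nat.add_sub_cancel] at hp
  have he : 0 < (univ.val.map w).esymm (m + 1) :=
    Multiset.esymm_pos (Multiset.forall_mem_map_iff.2 fun i _ => hw i) (by simpa using hkN)
  refine ⟨?_, fun i => ⟨?_, ?_⟩⟩
  · rw [sum_congr rfl fun i _ => hp i, ← sum_div, sum_mul_esymm_erase,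
      mul_div_cancel_right₀ _ he.ne']
    exact (Nat.cast_succ m).symm
  · rw [hp]
    exact div_nonneg (mul_nonneg (hw i).le (Multiset.esymm_nonneg
      (Multiset.forall_mem_map_iff.2 fun j _ => (hw j).le) _)) he.le
  · rw [hp, div_le_one he]
    exact mul_esymm_erase_le (fun j _ => (hw j).le) (mem_univ i) m
end

section
/- KKT characterization for entropic FTRL over the capped simplex: for R ∈ ℝ^N, η > 0, and 1 ≤ k < N, the unique maximizer of p ↦ ∑_i p_i R_i − (1/η) ∑_i p_i ln p_i over the set {p ∈ [0,1]^N : ∑_i p_i = k} is given by p_i = min(1, K·exp(η R_i)), where K > 0 is the unique constant satisfying ∑_i min(1, K·exp(η R_i)) = k. -/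
/-!
Write `a i = K e^{η R i}`, so that `p i = min 1 (a i)` and `η R i = log (a i) - log K`. Since `q`
and `p` have the same total mass, the gap `η (F p - F q)` of the objective `F` equals the
relative entropy `∑ i, p i · klFun (q i / p i)` of `q` with respect to `p` plus the cross term
`∑ i, (log (a i) - log (p i)) (p i - q i)`. The cross term is the complementary slackness of the
KKT conditions: each summand vanishes where `p i = a i` and is nonnegative where `p i = 1`, as
then `a i ≥ 1` and `q i ≤ 1`. Hence `F q ≤ F p`, with equality only if the relative entropy
vanishes, that is, `q = p`.
-/

open Real InformationTheory

/-- The capped simplex `{p ∈ [0,1]^N : ∑ i, p i = k}`. -/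
def cappedSimplex (N : ℕ) (k : ℕ) : Set (Fin N → ℝ) :=
  {p | (∀ i, 0 ≤ p i ∧ p i ≤ 1) ∧ ∑ i, p i = (k : ℝ)}

/-- The entropic FTRL objective `p ↦ ∑ i, p i R i − (1/η) ∑ i, p i ln (p i)`
(with the convention `0 ln 0 = 0`, automatic since `Real.log 0 = 0`). -/
noncomputable def ftrlObjective {N : ℕ} (R : Fin N → ℝ) (η : ℝ) (p : Fin N → ℝ) : ℝ :=
  ∑ i, p i * R i - (1 / η) * ∑ i, p i * Real.log (p i)

lemma mul_klFun_div {p : ℝ} (q : ℝ) (hp : p ≠ 0) :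
    p * klFun (q / p) = q * log q - q * log p - q + p := by
  rcases eq_or_ne q 0 with rfl | hq
  · simp [klFun]
  · rw [klFun_apply, log_div hq hp]
    field_simp
    ring

lemma log_sub_log_min_one_mul_nonneg (a : ℝ) {x : ℝ} (hx : x ≤ 1) :
    0 ≤ (log a - log (min 1 a)) * (min 1 a - x) := by
  rcases le_total a 1 with ha | ha
  · simp [min_eq_right ha]
  · rw [min_eq_left ha, log_one, sub_zero]
    exact mul_nonneg (log_nonneg ha) (sub_nonneg.mpr hx)

lemma mul_klFun_div_nonneg {p q : ℝ} (hp : 0 < p) (hq : 0 ≤ q) : 0 ≤ p * klFun (q / p) :=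
  mul_nonneg hp.le (klFun_nonneg (div_nonneg hq hp.le))

section RelativeEntropy

variable {ι : Type*} [Fintype ι] {p q : ι → ℝ} (hp : ∀ i, 0 < p i) (hq : ∀ i, 0 ≤ q i)
include hp hq

lemma sum_mul_klFun_div_nonneg : 0 ≤ ∑ i, p i * klFun (q i / p i) :=
  Finset.sum_nonneg fun i _ => mul_klFun_div_nonneg (hp i) (hq i)

lemma eq_of_sum_mul_klFun_div_eq_zero (h : ∑ i, p i * klFun (q i / p i) = 0) : q = p := by
  funext i
  have hi := (Finset.sum_eq_zero_iff_of_nonneg fun i _ => mul_klFun_div_nonneg (hp i) (hq i)).mp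
    h i (Finset.mem_univ i)
  rw [mul_eq_zero, klFun_eq_zero_iff (div_nonneg (hq i) (hp i).le)] at hi
  exact (div_eq_one_iff_eq (hp i).ne').mp (hi.resolve_left (hp i).ne')

end RelativeEntropy

lemma mul_ftrlObjective_sub_eq {N : ℕ} (R : Fin N → ℝ) {η K : ℝ} (hη : η ≠ 0) (hK : 0 < K)
    {p q : Fin N → ℝ} (hp : ∀ i, 0 < p i) (hsum : ∑ i, q i = ∑ i, p i) :
    η * (ftrlObjective R η p - ftrlObjective R η q) =
      ∑ i, p i * klFun (q i / p i) +
        ∑ i, (log (K * exp (η * R i)) - log (p i)) * (p i - q i) := by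
  have hlog i : log (K * exp (η * R i)) = log K + η * R i := by
    rw [log_mul hK.ne' (exp_pos _).ne', log_exp]
  simp only [ftrlObjective, mul_klFun_div _ (hp _).ne', hlog]
  have hsummand i : q i * log (q i) - q i * log (p i) - q i + p i +
      (log K + η * R i - log (p i)) * (p i - q i) = η * (p i * R i) - p i * log (p i) -
        (η * (q i * R i) - q i * log (q i)) + (log K + 1) * (p i - q i) := by ring
  rw [← Finset.sum_add_distrib, Finset.sum_congr rfl fun i _ => hsummand i]
  simp only [Finset.sum_add_distrib, Finset.sum_sub_distrib, ← Finset.mul_sum, hsum, sub_self,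
    mul_zero, add_zero]
  field_simp

theorem stmt_14_general (N k : ℕ) (R : Fin N → ℝ) (η : ℝ) (hη : 0 < η)
    (K : ℝ) (hK : 0 < K)
    (hKsum : ∑ i : Fin N, min 1 (K * Real.exp (η * R i)) = k)
    (p : Fin N → ℝ) (hp : ∀ i, p i = min 1 (K * Real.exp (η * R i))) :
    p ∈ cappedSimplex N k ∧
      (∀ q ∈ cappedSimplex N k, ftrlObjective R η q ≤ ftrlObjective R η p) ∧
      (∀ q ∈ cappedSimplex N k, ftrlObjective R η q = ftrlObjective R η p → q = p) := by
  have hp_pos i : 0 < p i := hp i ▸ lt_min one_pos (by positivity)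
  have hp_mem : p ∈ cappedSimplex N k :=
    ⟨fun i => ⟨(hp_pos i).le, (hp i).trans_le (min_le_left _ _)⟩, by simpa only [hp] using hKsum⟩
  have hgap : ∀ q ∈ cappedSimplex N k,
      ∑ i, p i * klFun (q i / p i) ≤ η * (ftrlObjective R η p - ftrlObjective R η q) := by
    rintro q ⟨hq01, hqsum⟩
    rw [mul_ftrlObjective_sub_eq R hη.ne' hK hp_pos (hqsum.trans hp_mem.2.symm)]
    refine le_add_of_nonneg_right (Finset.sum_nonneg fun i _ => ?_)
    rw [hp i]
    exact log_sub_log_min_one_mul_nonneg _ (hq01 i).2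
  refine ⟨hp_mem, fun q hq => ?_, fun q hq heq => ?_⟩
  · have hgap_nonneg := (sum_mul_klFun_div_nonneg hp_pos fun i => (hq.1 i).1).trans (hgap q hq)
    exact sub_nonneg.mp ((mul_nonneg_iff_of_pos_left hη).mp hgap_nonneg)
  · refine eq_of_sum_mul_klFun_div_eq_zero hp_pos (fun i => (hq.1 i).1) (le_antisymm ?_
      (sum_mul_klFun_div_nonneg hp_pos fun i => (hq.1 i).1))
    simpa only [heq, sub_self, mul_zero] using hgap q hq

/-- KKT characterization for entropic FTRL over the capped simplex: for
`R ∈ ℝ^N`, `η > 0`, `1 ≤ k < N`, and `K > 0` the constant satisfying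
`∑ i, min(1, K e^{η R i}) = k`, the point `p i = min(1, K e^{η R i})` lies in the capped
simplex and is the unique maximizer of the objective over it. -/
theorem stmt_14 (N k : ℕ) (hk : 1 ≤ k) (hkN : k < N) (R : Fin N → ℝ) (η : ℝ) (hη : 0 < η)
    (K : ℝ) (hK : 0 < K)
    (hKsum : ∑ i : Fin N, min 1 (K * Real.exp (η * R i)) = k)
    (p : Fin N → ℝ) (hp : ∀ i, p i = min 1 (K * Real.exp (η * R i))) :
    p ∈ cappedSimplex N k ∧
      (∀ q ∈ cappedSimplex N k, ftrlObjective R η q ≤ ftrlObjective R η p) ∧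
      (∀ q ∈ cappedSimplex N k, ftrlObjective R η q = ftrlObjective R η p → q = p) :=
  stmt_14_general N k R η hη K hK hKsum p hp
end

section
/- Normal CDF upper bound: for every u > 0, the standard normal CDF satisfies Φ(u) ≤ 1 − u·e^{−2u²}/√(2π). -/
open MeasureTheory

/-- The standard normal cumulative distribution function
`Φ(u) = (1/√(2π)) ∫_{-∞}^u e^{-x²/2} dx`. -/
noncomputable def stdNormalCDF (u : ℝ) : ℝ :=
  (Real.sqrt (2 * Real.pi))⁻¹ * ∫ x in Set.Iic u, Real.exp (-x ^ 2 / 2)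

/-! The Gaussian density is at least `e^{-2u²}` on `(u, 2u]`, so the tail mass beyond `u` is at
least `u e^{-2u²} / √(2π)`, and `Φ(u)` is one minus that tail mass. -/

open Set

lemma exp_neg_sq_div_two_eq (x : ℝ) : Real.exp (-x ^ 2 / 2) = Real.exp (-(1 / 2) * x ^ 2) := by
  ring_nf

lemma integrable_exp_neg_sq_div_two : Integrable fun x : ℝ => Real.exp (-x ^ 2 / 2) := by
  simpa only [exp_neg_sq_div_two_eq] using integrable_exp_neg_mul_sq (by norm_num : (0 : ℝ) < 1 / 2)

lemma integral_exp_neg_sq_div_two : ∫ x : ℝ, Real.exp (-x ^ 2 / 2) = Real.sqrt (2 * Real.pi) := by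
  simp only [exp_neg_sq_div_two_eq, integral_gaussian]
  norm_num [mul_comm]

lemma stdNormalCDF_eq_one_sub (u : ℝ) :
    stdNormalCDF u =
      1 - (Real.sqrt (2 * Real.pi))⁻¹ * ∫ x in Ioi u, Real.exp (-x ^ 2 / 2) := by
  have hsqrt : Real.sqrt (2 * Real.pi) ≠ 0 := (Real.sqrt_pos.2 (by positivity)).ne'
  have hsplit := intervalIntegral.integral_Iic_add_Ioi (b := u)
    integrable_exp_neg_sq_div_two.integrableOn integrable_exp_neg_sq_div_two.integrableOn
  rw [integral_exp_neg_sq_div_two] at hsplit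
  rw [stdNormalCDF, eq_sub_iff_add_eq.2 hsplit, mul_sub, inv_mul_cancel₀ hsqrt]

lemma mul_le_setIntegral_Ioi {f : ℝ → ℝ} {a b c : ℝ} (hf : IntegrableOn f (Ioi a))
    (hf_nonneg : ∀ x ∈ Ioi a, 0 ≤ f x) (hab : a ≤ b) (hc : ∀ x ∈ Ioc a b, c ≤ f x) :
    (b - a) * c ≤ ∫ x in Ioi a, f x := by
  have hbox : volume.real (Ioc a b) • c ≤ ∫ x in Ioc a b, f x :=
    setIntegral_ge_of_const_le measurableSet_Ioc (by simp [Real.volume_Ioc]) hc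
      (hf.mono_set Ioc_subset_Ioi_self)
  rw [Real.volume_real_Ioc_of_le hab, smul_eq_mul] at hbox
  exact hbox.trans (setIntegral_mono_set hf (ae_restrict_of_forall_mem measurableSet_Ioi hf_nonneg)
    (Filter.Eventually.of_forall Ioc_subset_Ioi_self))

lemma mul_exp_neg_two_mul_sq_le_integral_Ioi {u : ℝ} (hu : 0 < u) :
    u * Real.exp (-2 * u ^ 2) ≤ ∫ x in Ioi u, Real.exp (-x ^ 2 / 2) := by
  have hrect := mul_le_setIntegral_Ioi (c := Real.exp (-(2 * u) ^ 2 / 2))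
    integrable_exp_neg_sq_div_two.integrableOn (fun x _ => (Real.exp_pos _).le)
    (by linarith : u ≤ 2 * u) fun x hx => by
      have : x ^ 2 ≤ (2 * u) ^ 2 := pow_le_pow_left₀ (hu.trans hx.1).le hx.2 2
      exact Real.exp_le_exp.2 (by linarith)
  calc u * Real.exp (-2 * u ^ 2) = (2 * u - u) * Real.exp (-(2 * u) ^ 2 / 2) := by ring_nf
    _ ≤ _ := hrect

/-- For every `u > 0`, `Φ(u) ≤ 1 − u e^{−2u²} / √(2π)`. -/
theorem stmt_15 (u : ℝ) (hu : 0 < u) :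
    stdNormalCDF u ≤ 1 - u * Real.exp (-2 * u ^ 2) / Real.sqrt (2 * Real.pi) := by
  rw [stdNormalCDF_eq_one_sub, div_eq_inv_mul]
  gcongr
  exact mul_exp_neg_two_mul_sq_le_integral_Ioi hu
end
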